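/- Let G be a unital inverse semigroup, (A, α) and (B, β) G-algebras, and let (φ₊, φ₋, u₊, u₋) be an equivariant A,B-cocycle (with B in place of B ⊗ K). Set A_x := {(a, m) ∈ A ⊕ M(B) : φ₊(a) − m ∈ B}, let γ_g(a, m) := (α_g(a), u₊_g β̄_g(m) u₊_g*) be the associated G-action on A_x, and define u_g(a, m) := (α_{g g⁻¹}(a), u₋_g u₊_g* m) with adjoint u_g*(a, m) := (α_{g g⁻¹}(a), u₊_g u₋_g* m). Then u is a γ-cocycle on A_x: for all (a, m) ∈ A_x and g, h ∈ G one has u_g*(u_g(a, m)) = γ_{g g⁻¹}(a, m), u_{g g⁻¹}(a, m) = u_g(u_g*(a, m)), and u_{g h}(a, m) = u_g(γ_g(u_h(γ_{g⁻¹}(a, m)))). -/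
import Mathlib


open scoped MultiplierAlgebra

/-- A unital inverse semigroup: a monoid in which every element `g` has a unique
generalized inverse `g⁻¹` with `g * g⁻¹ * g = g` and `g⁻¹ * g * g⁻¹ = g⁻¹`. -/
class InverseMonoid (G : Type*) extends Monoid G, Inv G where
  mul_inv_mul : ∀ g : G, g * g⁻¹ * g = g
  inv_mul_inv : ∀ g : G, g⁻¹ * g * g⁻¹ = g⁻¹
  inv_unique : ∀ {g h : G}, g * h * g = g → h * g * h = h → h = g⁻¹

section CStarAux
variable {B : Type*} [NonUnitalCStarAlgebra B]

private lemma aux_eq_of_mul_right {c d : B} (h : ∀ y : B, c * y = d * y) : c = d := by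
  have h0 : (c - d) * star (c - d) = 0 := by rw [sub_mul, h (star (c - d)), sub_self]
  have h1 : star (c - d) = 0 :=
    (CStarRing.star_mul_self_eq_zero_iff (star (c - d))).mp (by rwa [star_star])
  exact sub_eq_zero.mp (star_eq_zero.mp h1)

private lemma aux_eq_of_mul_left {c d : B} (h : ∀ y : B, y * c = y * d) : c = d := by
  have h0 : star (c - d) * (c - d) = 0 := by rw [mul_sub, h (star (c - d)), sub_self]
  exact sub_eq_zero.mp ((CStarRing.star_mul_self_eq_zero_iff (c - d)).mp h0)

private lemma aux_mext {m n : 𝓜(ℂ, B)} (h : ∀ b : B, m.fst b = n.fst b) : m = n := by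
  have hfst : m.fst = n.fst := ContinuousLinearMap.ext h
  apply DoubleCentralizer.ext
  refine Prod.ext hfst (ContinuousLinearMap.ext fun x => ?_)
  refine aux_eq_of_mul_right fun y => ?_
  rw [m.central, n.central, hfst]

private lemma aux_mul_fst (m : 𝓜(ℂ, B)) (x y : B) : m.fst (x * y) = m.fst x * y := by
  refine aux_eq_of_mul_left fun z => ?_
  rw [← m.central, ← mul_assoc, m.central, mul_assoc]

private lemma aux_mul_fst_apply (a b : 𝓜(ℂ, B)) (x : B) : (a * b).fst x = a.fst (b.fst x) := by
  rw [DoubleCentralizer.mul_fst]; rfl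

private lemma aux_pisom (W : 𝓜(ℂ, B)) (h : (star W * W) * (star W * W) = star W * W) :
    W * (star W * W) = W := by
  rw [← sub_eq_zero, ← CStarRing.star_mul_self_eq_zero_iff]
  have hexp : star (W * (star W * W) - W) * (W * (star W * W) - W)
      = ((star W * W) * (star W * W)) * (star W * W)
        - (star W * W) * (star W * W) - ((star W * W) * (star W * W) - star W * W) := by
    simp only [star_sub, star_mul, star_star]
    noncomm_ring
  rw [hexp, h, h]
  simp

end CStarAux

section IMAux
variable {G : Type*} [InverseMonoid G]

private lemma aux_inv_inv (g : G) : g⁻¹⁻¹ = g :=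
  (InverseMonoid.inv_unique (InverseMonoid.inv_mul_inv g) (InverseMonoid.mul_inv_mul g)).symm

private lemma aux_idem (g : G) : (g * g⁻¹) * (g * g⁻¹) = g * g⁻¹ := by
  calc (g * g⁻¹) * (g * g⁻¹) = (g * g⁻¹ * g) * g⁻¹ := by simp only [mul_assoc]
    _ = g * g⁻¹ := by rw [InverseMonoid.mul_inv_mul]

private lemma aux_inv_of_idem {e : G} (he : e * e = e) : e⁻¹ = e :=
  (InverseMonoid.inv_unique (by rw [he, he]) (by rw [he, he])).symm

private lemma aux_idem_inv (g : G) : (g * g⁻¹)⁻¹ = g * g⁻¹ := aux_inv_of_idem (aux_idem g)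

private lemma aux_idem_comm {e f : G} (he : e * e = e) (hf : f * f = f) : e * f = f * e := by
  have he' : ∀ x : G, e * (e * x) = e * x := fun x => by rw [← mul_assoc, he]
  have hf' : ∀ x : G, f * (f * x) = f * x := fun x => by rw [← mul_assoc, hf]
  have main : ∀ e f : G, (∀ x : G, e * (e * x) = e * x) → (∀ x : G, f * (f * x) = f * x) →
      (e * f) * (e * f) = e * f ∧ (e * f)⁻¹ = e * f := by
    intro e f he' hf'
    set x := (e * f)⁻¹ with hx
    have key1 : e * (f * (x * (e * f))) = e * f := by
      have := InverseMonoid.mul_inv_mul (e * f)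
      simpa only [mul_assoc] using this
    have key2 : x * (e * (f * x)) = x := by
      have := InverseMonoid.inv_mul_inv (e * f)
      simpa only [mul_assoc] using this
    have key2e : x * (e * (f * (x * e))) = x * e := by
      have := congrArg (· * e) key2
      simpa only [mul_assoc] using this
    have s1a : (e * f) * (f * (x * e)) * (e * f) = e * f := by
      calc (e * f) * (f * (x * e)) * (e * f)
          = e * (f * (f * (x * (e * (e * f))))) := by simp only [mul_assoc]
        _ = e * (f * (f * (x * (e * f)))) := by rw [he' f]
        _ = e * (f * (x * (e * f))) := by rw [hf' (x * (e * f))]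
        _ = e * f := key1
    have s1b : (f * (x * e)) * (e * f) * (f * (x * e)) = f * (x * e) := by
      calc (f * (x * e)) * (e * f) * (f * (x * e))
          = f * (x * (e * (e * (f * (f * (x * e)))))) := by simp only [mul_assoc]
        _ = f * (x * (e * (f * (f * (x * e))))) := by rw [he' (f * (f * (x * e)))]
        _ = f * (x * (e * (f * (x * e)))) := by rw [hf' (x * e)]
        _ = f * (x * e) := by rw [key2e]
    have hx1 : f * (x * e) = x := InverseMonoid.inv_unique s1a s1b
    have s2 : x * x = x := by
      calc x * x = (f * (x * e)) * (f * (x * e)) := by rw [hx1]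
        _ = f * (x * (e * (f * (x * e)))) := by simp only [mul_assoc]
        _ = f * (x * e) := by rw [key2e]
        _ = x := hx1
    have s3 : e * f = x := by
      have h1 : x * (e * f) * x = x := by
        have := InverseMonoid.inv_mul_inv (e * f); rw [← hx] at this; exact this
      have h2 : (e * f) * x * (e * f) = e * f := InverseMonoid.mul_inv_mul (e * f)
      have := InverseMonoid.inv_unique h1 h2
      rw [aux_inv_of_idem s2] at this
      exact this
    constructor
    · rw [s3]; exact s2
    · exact s3.symm
  obtain ⟨hef, hefi⟩ := main e f he' hf'
  obtain ⟨hfe, hfei⟩ := main f e hf' he'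
  have c1 : (e * f) * (f * e) * (e * f) = e * f := by
    calc (e * f) * (f * e) * (e * f)
        = e * (f * (f * (e * (e * f)))) := by simp only [mul_assoc]
      _ = e * (f * (f * (e * f))) := by rw [he' f]
      _ = e * (f * (e * f)) := by rw [hf' (e * f)]
      _ = e * f := by have := hef; simpa only [mul_assoc] using this
  have c2 : (f * e) * (e * f) * (f * e) = f * e := by
    calc (f * e) * (e * f) * (f * e)
        = f * (e * (e * (f * (f * e)))) := by simp only [mul_assoc]
      _ = f * (e * (f * (f * e))) := by rw [he' (f * (f * e))]
      _ = f * (e * (f * e)) := by rw [hf' e]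
      _ = f * e := by have := hfe; simpa only [mul_assoc] using this
  have : f * e = (e * f)⁻¹ := InverseMonoid.inv_unique c1 c2
  rw [this, hefi]

private lemma aux_mul_inv_rev (g h : G) : (g * h)⁻¹ = h⁻¹ * g⁻¹ := by
  have hE : (h * h⁻¹) * (h * h⁻¹) = h * h⁻¹ := aux_idem h
  have hF : (g⁻¹ * g) * (g⁻¹ * g) = g⁻¹ * g := by
    have := aux_idem g⁻¹; rwa [aux_inv_inv] at this
  have hcomm : (h * h⁻¹) * (g⁻¹ * g) = (g⁻¹ * g) * (h * h⁻¹) := aux_idem_comm hE hF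
  have mh : h * (h⁻¹ * h) = h := by
    have := InverseMonoid.mul_inv_mul h; simpa only [mul_assoc] using this
  have mg : g * (g⁻¹ * g) = g := by
    have := InverseMonoid.mul_inv_mul g; simpa only [mul_assoc] using this
  have mh' : h⁻¹ * (h * h⁻¹) = h⁻¹ := by
    have := InverseMonoid.inv_mul_inv h; simpa only [mul_assoc] using this
  have mg' : g⁻¹ * (g * g⁻¹) = g⁻¹ := by
    have := InverseMonoid.inv_mul_inv g; simpa only [mul_assoc] using this
  have c1 : (g * h) * (h⁻¹ * g⁻¹) * (g * h) = g * h := by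
    calc (g * h) * (h⁻¹ * g⁻¹) * (g * h)
        = g * ((h * h⁻¹) * ((g⁻¹ * g) * h)) := by simp only [mul_assoc]
      _ = g * (((h * h⁻¹) * (g⁻¹ * g)) * h) := by rw [← mul_assoc (h * h⁻¹) (g⁻¹ * g) h]
      _ = g * (((g⁻¹ * g) * (h * h⁻¹)) * h) := by rw [hcomm]
      _ = g * (g⁻¹ * (g * (h * (h⁻¹ * h)))) := by simp only [mul_assoc]
      _ = g * (g⁻¹ * (g * h)) := by rw [mh]
      _ = (g * (g⁻¹ * g)) * h := by simp only [mul_assoc]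
      _ = g * h := by rw [mg]
  have c2 : (h⁻¹ * g⁻¹) * (g * h) * (h⁻¹ * g⁻¹) = h⁻¹ * g⁻¹ := by
    calc (h⁻¹ * g⁻¹) * (g * h) * (h⁻¹ * g⁻¹)
        = h⁻¹ * ((g⁻¹ * g) * ((h * h⁻¹) * g⁻¹)) := by simp only [mul_assoc]
      _ = h⁻¹ * (((g⁻¹ * g) * (h * h⁻¹)) * g⁻¹) := by rw [← mul_assoc (g⁻¹ * g) (h * h⁻¹) g⁻¹]
      _ = h⁻¹ * (((h * h⁻¹) * (g⁻¹ * g)) * g⁻¹) := by rw [hcomm]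
      _ = h⁻¹ * (h * (h⁻¹ * (g⁻¹ * (g * g⁻¹)))) := by simp only [mul_assoc]
      _ = h⁻¹ * (h * (h⁻¹ * g⁻¹)) := by rw [mg']
      _ = (h⁻¹ * (h * h⁻¹)) * g⁻¹ := by simp only [mul_assoc]
      _ = h⁻¹ * g⁻¹ := by rw [mh']
  exact (InverseMonoid.inv_unique c1 c2).symm

end IMAux

/-- for an equivariant `A,B`-cocycle `(φ₊, φ₋, u₊, u₋)`, the maps
`u_g(a, m) = (α_{g g⁻¹}(a), u₋_g u₊_g* m)` with adjoints
`u_g*(a, m) = (α_{g g⁻¹}(a), u₊_g u₋_g* m)` form a `γ`-cocycle on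
`A_x = {(a, m) : φ₊(a) - m ∈ B}`, where `γ_g(a, m) = (α_g(a), u₊_g β̄_g(m) u₊_g*)`:
`u_g* u_g = γ_{g g⁻¹}`, `u_{g g⁻¹} = u_g u_g*` and `u_{g h} = u_g γ̄_g(u_h)` pointwise. -/
theorem modified_cocycle_is_cocycle
    {G : Type*} [InverseMonoid G] {A : Type*} [NonUnitalCStarAlgebra A]
    {B : Type*} [NonUnitalCStarAlgebra B]
    -- `(A, α)` is a `G`-algebra:
    (α : G → A →⋆ₙₐ[ℂ] A)
    (hα_one : α 1 = NonUnitalStarAlgHom.id ℂ A)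
    (hα_mul : ∀ g h : G, α (g * h) = (α g).comp (α h))
    (hα_central : ∀ (g : G) (x y : A), α (g * g⁻¹) x * y = x * α (g * g⁻¹) y)
    -- `(B, β)` is a `G`-algebra:
    (β : G → B →⋆ₙₐ[ℂ] B)
    (hβ_one : β 1 = NonUnitalStarAlgHom.id ℂ B)
    (hβ_mul : ∀ g h : G, β (g * h) = (β g).comp (β h))
    (hβ_central : ∀ (g : G) (x y : B), β (g * g⁻¹) x * y = x * β (g * g⁻¹) y)
    -- `β̄` is the extension of `β` to the multiplier algebra `M(B)`:
    (βbar : G → 𝓜(ℂ, B) → 𝓜(ℂ, B))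
    (hβbar : ∀ (g : G) (m : 𝓜(ℂ, B)) (b : B), (βbar g m).fst b = β g (m.fst (β g⁻¹ b)))
    -- `(φ₊, φ₋, u₊, u₋)` is an equivariant `A,B`-cocycle:
    (φp φm : A →⋆ₙₐ[ℂ] 𝓜(ℂ, B))
    (up um : G → 𝓜(ℂ, B))
    (hup₁ : ∀ (g : G) (b : B), (star (up g) * up g).fst b = β (g * g⁻¹) b)
    (hup₂ : ∀ g : G, up (g * g⁻¹) = up g * star (up g))
    (hup₃ : ∀ g h : G, up (g * h) = up g * βbar g (up h))
    (hum₁ : ∀ (g : G) (b : B), (star (um g) * um g).fst b = β (g * g⁻¹) b)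
    (hum₂ : ∀ g : G, um (g * g⁻¹) = um g * star (um g))
    (hum₃ : ∀ g h : G, um (g * h) = um g * βbar g (um h))
    (hcov_p : ∀ (a : A) (g : G), up g * βbar g (φp a) * star (up g) = φp (α g a))
    (hcov_m : ∀ (a : A) (g : G), um g * βbar g (φm a) * star (um g) = φm (α g a))
    (hdiff_φ : ∀ a : A, ∃ b : B, φp a - φm a = (b : 𝓜(ℂ, B)))
    (hdiff_u : ∀ g : G, ∃ b : B, up g - um g = (b : 𝓜(ℂ, B)))
    -- `γ` is the associated `G`-action on `A ⊕ M(B)`, and `uu`, `uus` the modified cocycle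
    -- and its adjoint:
    (γ uu uus : G → A × 𝓜(ℂ, B) → A × 𝓜(ℂ, B))
    (hγ : ∀ (g : G) (p : A × 𝓜(ℂ, B)),
      γ g p = (α g p.1, up g * βbar g p.2 * star (up g)))
    (huu : ∀ (g : G) (p : A × 𝓜(ℂ, B)),
      uu g p = (α (g * g⁻¹) p.1, um g * star (up g) * p.2))
    (huus : ∀ (g : G) (p : A × 𝓜(ℂ, B)),
      uus g p = (α (g * g⁻¹) p.1, up g * star (um g) * p.2)) :
    ∀ p : A × 𝓜(ℂ, B), (∃ b : B, φp p.1 - p.2 = (b : 𝓜(ℂ, B))) →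
      (∀ g : G, uus g (uu g p) = γ (g * g⁻¹) p) ∧
      (∀ g : G, uu (g * g⁻¹) p = uu g (uus g p)) ∧
      (∀ g h : G, uu (g * h) p = uu g (γ g (uu h (γ g⁻¹ p)))) := by
  intro p _hp
  -- applied forms of the homomorphism identities
  have hαapp : ∀ (g h : G) (a : A), α (g * h) a = α g (α h a) := fun g h a => by
    rw [hα_mul]; rfl
  have hβapp : ∀ (g h : G) (b : B), β (g * h) b = β g (β h b) := fun g h b => by
    rw [hβ_mul]; rfl
  -- `β g w * y = β g (w * β g⁻¹ y)` and its symmetric version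
  have L1 : ∀ (g : G) (w y : B), β g w * y = β g (w * β g⁻¹ y) := by
    intro g w y
    have h1 : β (g * g⁻¹) (β g w) = β g w := by
      rw [← hβapp, InverseMonoid.mul_inv_mul]
    calc β g w * y = β (g * g⁻¹) (β g w) * y := by rw [h1]
      _ = β g w * β (g * g⁻¹) y := hβ_central g (β g w) y
      _ = β g w * β g (β g⁻¹ y) := by rw [hβapp]
      _ = β g (w * β g⁻¹ y) := by rw [← map_mul]
  have L1' : ∀ (g : G) (w y : B), y * β g w = β g (β g⁻¹ y * w) := by
    intro g w y
    have h1 : β (g * g⁻¹) (β g w) = β g w := by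
      rw [← hβapp, InverseMonoid.mul_inv_mul]
    calc y * β g w = y * β (g * g⁻¹) (β g w) := by rw [h1]
      _ = β (g * g⁻¹) y * β g w := (hβ_central g y (β g w)).symm
      _ = β g (β g⁻¹ y) * β g w := by rw [hβapp]
      _ = β g (β g⁻¹ y * w) := by rw [← map_mul]
  -- multipliers commute with `β (g * g⁻¹)` applied to elements of `B`
  have comm_fun : ∀ (g : G) (N : 𝓜(ℂ, B)) (x : B),
      N.fst (β (g * g⁻¹) x) = β (g * g⁻¹) (N.fst x) := by
    intro g N x
    refine aux_eq_of_mul_right fun y => ?_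
    rw [← aux_mul_fst, hβ_central, aux_mul_fst, ← hβ_central]
  -- the "range projections"
  have M1 : ∀ g : G, star (um g) * um g = star (up g) * up g := fun g =>
    aux_mext fun b => by rw [hum₁, hup₁]
  have M2 : ∀ g : G, (star (up g) * up g) * (star (up g) * up g) = star (up g) * up g :=
    fun g => aux_mext fun b => by
      rw [aux_mul_fst_apply, hup₁ g, hup₁ g, ← hβapp, aux_idem]
  have M3 : ∀ g : G, star (star (up g) * up g) = star (up g) * up g := fun g => by
    rw [star_mul, star_star]
  have M4 : ∀ g : G, up g * (star (up g) * up g) = up g := fun g => aux_pisom (up g) (M2 g)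
  have M4' : ∀ g : G, um g * (star (up g) * up g) = um g := fun g => by
    have h := aux_pisom (um g) (by rw [M1]; exact M2 g)
    rwa [M1] at h
  have M5 : ∀ g : G, up (g * g⁻¹) = star (up g) * up g := by
    intro g
    have h2 : star (up (g * g⁻¹)) = up (g * g⁻¹) := by
      rw [hup₂ g, star_mul, star_star]
    have h0 : up ((g * g⁻¹) * (g * g⁻¹)⁻¹) = up (g * g⁻¹) * star (up (g * g⁻¹)) :=
      hup₂ (g * g⁻¹)
    rw [aux_idem_inv, aux_idem, h2] at h0
    have h5 : up (g * g⁻¹) = star (up (g * g⁻¹)) * up (g * g⁻¹) := by rw [h2, ← h0]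
    have h3 : ∀ b : B, (star (up (g * g⁻¹)) * up (g * g⁻¹)).fst b = β (g * g⁻¹) b := by
      intro b
      have h := hup₁ (g * g⁻¹) b
      rwa [aux_idem_inv, aux_idem] at h
    refine aux_mext fun b => ?_
    rw [h5, h3, ← hup₁ g]
  have M5' : ∀ g : G, um (g * g⁻¹) = star (up g) * up g := by
    intro g
    have h2 : star (um (g * g⁻¹)) = um (g * g⁻¹) := by
      rw [hum₂ g, star_mul, star_star]
    have h0 : um ((g * g⁻¹) * (g * g⁻¹)⁻¹) = um (g * g⁻¹) * star (um (g * g⁻¹)) :=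
      hum₂ (g * g⁻¹)
    rw [aux_idem_inv, aux_idem, h2] at h0
    have h5 : um (g * g⁻¹) = star (um (g * g⁻¹)) * um (g * g⁻¹) := by rw [h2, ← h0]
    have h3 : ∀ b : B, (star (um (g * g⁻¹)) * um (g * g⁻¹)).fst b = β (g * g⁻¹) b := by
      intro b
      have h := hum₁ (g * g⁻¹) b
      rwa [aux_idem_inv, aux_idem] at h
    refine aux_mext fun b => ?_
    rw [h5, h3, ← hup₁ g]
  have M6 : ∀ g : G, up g * star (up g) = star (up g) * up g := fun g => by
    rw [← hup₂, M5]
  have M6' : ∀ g : G, um g * star (um g) = star (up g) * up g := fun g => by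
    rw [← hum₂, M5']
  -- absorption facts
  have F2 : ∀ g : G, (star (up g) * up g) * up g = up g := fun g => by
    rw [← M6, mul_assoc, M4]
  have F3 : ∀ g : G, star (up g) * (star (up g) * up g) = star (up g) := fun g => by
    have h := congrArg star (F2 g); rwa [star_mul, M3] at h
  have F4 : ∀ g : G, (star (up g) * up g) * star (up g) = star (up g) := fun g => by
    have h := congrArg star (M4 g); rwa [star_mul, M3] at h
  have F6 : ∀ g : G, (star (up g) * up g) * um g = um g := fun g => by
    rw [← M6', mul_assoc, M1]
    exact M4' g
  have F7 : ∀ g : G, star (um g) * (star (up g) * up g) = star (um g) := fun g => by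
    have h := congrArg star (F6 g); rwa [star_mul, M3] at h
  -- commutation with arbitrary multipliers
  have M8 : ∀ (g : G) (N : 𝓜(ℂ, B)),
      N * (star (up g) * up g) = (star (up g) * up g) * N := by
    intro g N
    refine aux_mext fun b => ?_
    rw [aux_mul_fst_apply N (star (up g) * up g) b,
      aux_mul_fst_apply (star (up g) * up g) N b, hup₁ g, hup₁ g]
    exact comm_fun g N b
  have M9a : ∀ (g : G) (M : 𝓜(ℂ, B)), (star (up g) * up g) * βbar g M = βbar g M := by
    intro g M
    refine aux_mext fun b => ?_
    rw [aux_mul_fst_apply, hup₁ g, hβbar g M b, ← hβapp, InverseMonoid.mul_inv_mul]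
  -- multiplicativity of `βbar g`
  have Imm : ∀ g : G, g * (g⁻¹ * g) = g := fun g => by
    have h := InverseMonoid.mul_inv_mul g; simpa only [mul_assoc] using h
  have M10 : ∀ (g : G) (M N : 𝓜(ℂ, B)), βbar g (M * N) = βbar g M * βbar g N := by
    intro g M N
    refine aux_mext fun b => ?_
    rw [hβbar g (M * N) b, aux_mul_fst_apply M N, aux_mul_fst_apply (βbar g M) (βbar g N),
      hβbar g N b, hβbar g M, ← hβapp g⁻¹ g]
    rw [show g⁻¹ * g = g⁻¹ * g⁻¹⁻¹ from by rw [aux_inv_inv]]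
    rw [comm_fun g⁻¹ M, aux_inv_inv, ← hβapp, Imm]
  -- the second component of `βbar` and compatibility with `star`
  have M11 : ∀ (g : G) (M : 𝓜(ℂ, B)) (x : B),
      (βbar g M).snd x = β g (M.snd (β g⁻¹ x)) := by
    intro g M x
    refine aux_eq_of_mul_right fun y => ?_
    rw [(βbar g M).central, hβbar, L1' g _ x, ← M.central, ← L1 g _ y]
  have M12 : ∀ (g : G) (M : 𝓜(ℂ, B)), star (βbar g M) = βbar g (star M) := by
    intro g M
    refine aux_mext fun b => ?_
    rw [DoubleCentralizer.star_fst, M11, map_star (β g⁻¹) b, ← map_star (β g),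
      hβbar g (star M) b, DoubleCentralizer.star_fst M]
  -- `βbar g` of the cocycle at `g⁻¹`
  have M13 : ∀ g : G, βbar g (up g⁻¹) = star (up g) := by
    intro g
    have h := hup₃ g g⁻¹
    rw [M5 g] at h
    calc βbar g (up g⁻¹) = (star (up g) * up g) * βbar g (up g⁻¹) := (M9a g _).symm
      _ = star (up g) * (up g * βbar g (up g⁻¹)) := by rw [mul_assoc]
      _ = star (up g) * (star (up g) * up g) := by rw [← h]
      _ = star (up g) := F3 g
  have M13' : ∀ g : G, βbar g (um g⁻¹) = star (um g) := by
    intro g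
    have h := hum₃ g g⁻¹
    rw [M5' g] at h
    calc βbar g (um g⁻¹) = (star (up g) * up g) * βbar g (um g⁻¹) := (M9a g _).symm
      _ = (star (um g) * um g) * βbar g (um g⁻¹) := by rw [M1]
      _ = star (um g) * (um g * βbar g (um g⁻¹)) := by rw [mul_assoc]
      _ = star (um g) * (star (up g) * up g) := by rw [← h]
      _ = star (um g) := F7 g
  have M14 : ∀ g : G, βbar g (star (up g⁻¹)) = up g := fun g => by
    rw [← M12, M13, star_star]
  have M15 : ∀ (g : G) (M : 𝓜(ℂ, B)),
      βbar g (βbar g⁻¹ M) = (star (up g) * up g) * M := by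
    intro g M
    refine aux_mext fun b => ?_
    rw [hβbar g, hβbar g⁻¹, aux_inv_inv, ← hβapp g g⁻¹, ← hβapp g g⁻¹,
      comm_fun g M b, ← hβapp, aux_idem, aux_mul_fst_apply, hup₁ g]
  have M16 : ∀ (g : G) (M : 𝓜(ℂ, B)),
      βbar (g * g⁻¹) M = (star (up g) * up g) * M := by
    intro g M
    refine aux_mext fun b => ?_
    rw [hβbar, aux_idem_inv, comm_fun g M b, ← hβapp, aux_idem,
      aux_mul_fst_apply, hup₁ g]
  -- absorption facts with a trailing factor
  have FN1 : ∀ (g : G) (N : 𝓜(ℂ, B)),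
      um g * (star (up g) * (up g * N)) = um g * N := by
    intro g N
    calc um g * (star (up g) * (up g * N))
        = (um g * (star (up g) * up g)) * N := by simp only [mul_assoc]
      _ = um g * N := by rw [M4']
  have FN2 : ∀ (g : G) (N : 𝓜(ℂ, B)),
      star (up g) * (star (up g) * (up g * N)) = star (up g) * N := by
    intro g N
    calc star (up g) * (star (up g) * (up g * N))
        = (star (up g) * (star (up g) * up g)) * N := by simp only [mul_assoc]
      _ = star (up g) * N := by rw [F3]
  have FN5 : ∀ (g : G) (N : 𝓜(ℂ, B)),
      up g * (star (um g) * (um g * N)) = up g * N := by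
    intro g N
    calc up g * (star (um g) * (um g * N))
        = (up g * (star (um g) * um g)) * N := by simp only [mul_assoc]
      _ = up g * N := by rw [M1, M4]
  refine ⟨?_, ?_, ?_⟩
  · -- uus g (uu g p) = γ (g * g⁻¹) p
    intro g
    simp only [huu, huus, hγ]
    refine Prod.ext ?_ ?_
    · show α (g * g⁻¹) (α (g * g⁻¹) p.1) = α (g * g⁻¹) p.1
      rw [← hαapp, aux_idem]
    · show up g * star (um g) * (um g * star (up g) * p.2)
        = up (g * g⁻¹) * βbar (g * g⁻¹) p.2 * star (up (g * g⁻¹))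
      have hl : up g * star (um g) * (um g * star (up g) * p.2)
          = (star (up g) * up g) * p.2 := by
        calc up g * star (um g) * (um g * star (up g) * p.2)
            = up g * (star (um g) * (um g * (star (up g) * p.2))) := by
              simp only [mul_assoc]
          _ = up g * (star (up g) * p.2) := by rw [FN5]
          _ = (up g * star (up g)) * p.2 := by simp only [mul_assoc]
          _ = (star (up g) * up g) * p.2 := by rw [M6]
      have hr : up (g * g⁻¹) * βbar (g * g⁻¹) p.2 * star (up (g * g⁻¹))
          = (star (up g) * up g) * p.2 := by
        rw [M5, M16, M3]
        rw [← mul_assoc (star (up g) * up g) (star (up g) * up g) p.2, M2, mul_assoc,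
          M8 g p.2, ← mul_assoc, M2]
      rw [hl, hr]
  · -- uu (g * g⁻¹) p = uu g (uus g p)
    intro g
    simp only [huu, huus]
    refine Prod.ext ?_ ?_
    · show α ((g * g⁻¹) * (g * g⁻¹)⁻¹) p.1 = α (g * g⁻¹) (α (g * g⁻¹) p.1)
      rw [aux_idem_inv, aux_idem, ← hαapp, aux_idem]
    · show um (g * g⁻¹) * star (up (g * g⁻¹)) * p.2
        = um g * star (up g) * (up g * star (um g) * p.2)
      have hl : um (g * g⁻¹) * star (up (g * g⁻¹)) * p.2
          = (star (up g) * up g) * p.2 := by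
        rw [M5', M5, M3, M2]
      have hr : um g * star (up g) * (up g * star (um g) * p.2)
          = (star (up g) * up g) * p.2 := by
        calc um g * star (up g) * (up g * star (um g) * p.2)
            = um g * (star (up g) * (up g * (star (um g) * p.2))) := by
              simp only [mul_assoc]
          _ = um g * (star (um g) * p.2) := by rw [FN1]
          _ = (um g * star (um g)) * p.2 := by simp only [mul_assoc]
          _ = (star (up g) * up g) * p.2 := by rw [M6']
      rw [hl, hr]
  · -- uu (g * h) p = uu g (γ g (uu h (γ g⁻¹ p)))
    intro g h
    simp only [huu, hγ]
    refine Prod.ext ?_ ?_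
    · show α ((g * h) * (g * h)⁻¹) p.1
        = α (g * g⁻¹) (α g (α (h * h⁻¹) (α g⁻¹ p.1)))
      have hidx : (g * h) * (g * h)⁻¹ = (g * g⁻¹) * (g * ((h * h⁻¹) * g⁻¹)) := by
        rw [aux_mul_inv_rev g h]
        have hcan : g * (g⁻¹ * (g * (h * (h⁻¹ * g⁻¹)))) = g * (h * (h⁻¹ * g⁻¹)) := by
          have hh := congrArg (· * (h * (h⁻¹ * g⁻¹))) (InverseMonoid.mul_inv_mul g)
          simpa only [mul_assoc] using hh
        calc (g * h) * (h⁻¹ * g⁻¹) = g * (h * (h⁻¹ * g⁻¹)) := by simp only [mul_assoc]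
          _ = g * (g⁻¹ * (g * (h * (h⁻¹ * g⁻¹)))) := hcan.symm
          _ = (g * g⁻¹) * (g * ((h * h⁻¹) * g⁻¹)) := by simp only [mul_assoc]
      calc α ((g * h) * (g * h)⁻¹) p.1
          = α ((g * g⁻¹) * (g * ((h * h⁻¹) * g⁻¹))) p.1 := by rw [hidx]
        _ = α (g * g⁻¹) (α (g * ((h * h⁻¹) * g⁻¹)) p.1) := hαapp _ _ _
        _ = α (g * g⁻¹) (α g (α ((h * h⁻¹) * g⁻¹) p.1)) := by
            rw [hαapp g ((h * h⁻¹) * g⁻¹) p.1]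
        _ = α (g * g⁻¹) (α g (α (h * h⁻¹) (α g⁻¹ p.1))) := by
            rw [hαapp (h * h⁻¹) g⁻¹ p.1]
    · show um (g * h) * star (up (g * h)) * p.2
        = um g * star (up g) *
          (up g * βbar g (um h * star (up h) * (up g⁻¹ * βbar g⁻¹ p.2 * star (up g⁻¹)))
            * star (up g))
      have hlhs : um (g * h) * star (up (g * h)) * p.2
          = um g * (βbar g (um h) * (βbar g (star (up h)) * (star (up g) * p.2))) := by
        rw [hum₃, hup₃, star_mul (up g) (βbar g (up h)), M12]
        simp only [mul_assoc]
      have hrhs : um g * star (up g) *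
          (up g * βbar g (um h * star (up h) * (up g⁻¹ * βbar g⁻¹ p.2 * star (up g⁻¹)))
            * star (up g))
          = um g * (βbar g (um h) * (βbar g (star (up h)) * (star (up g) * p.2))) := by
        simp only [M10]
        rw [M13, M14, M15]
        simp only [mul_assoc]
        rw [FN1, FN2, M6 g, M8 g p.2]
        simp only [mul_assoc]
        rw [FN2]
      rw [hlhs, hrhs]
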